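/- For x ∈ S^m ⊂ ℝ^{m+1} and θ ∈ S^1, the m+1 vectors b_i = (M_i(x), x_i • ∂θ) in T_x S^m × T_θ S^1 ≅ ℝ^{m+2} form an orthonormal basis of the (m+1)-dimensional tangent space of S^m × S^1 at (x,θ), where M_i(x) = e_i - x_i • x and ∂θ is a fixed unit tangent vector to S^1. Concretely: viewing T_x S^m ⊕ ℝ ⊂ ℝ^{m+1} ⊕ ℝ, the vectors v_i = (e_i - x_i • x, x_i) for i = 1,…,m+1 are pairwise orthogonal unit vectors. -/
import Mathlib


open scoped RealInnerProductSpace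

/-- The `i`-th meridian vector at `x ∈ Sᵐ ⊂ ℝ^{m+1}`. -/
noncomputable def meridian {m : ℕ} (x : EuclideanSpace ℝ (Fin (m + 1))) (i : Fin (m + 1)) :
    EuclideanSpace ℝ (Fin (m + 1)) :=
  EuclideanSpace.single i 1 - x i • x

/-- Inner product on the orthogonal direct sum `ℝ^{m+1} ⊕ ℝ`. -/
noncomputable def inn2 {m : ℕ} (u v : EuclideanSpace ℝ (Fin (m + 1)) × ℝ) : ℝ :=
  ⟪u.1, v.1⟫ + u.2 * v.2

/-- The vectors `bᵢ = (Mᵢ(x), xᵢ ∂θ)` are pairwise orthogonal unit vectors in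
`T_x Sᵐ × T_θ S¹ ⊂ ℝ^{m+1} ⊕ ℝ`. -/
theorem stmt_2 (m : ℕ) (hm : 1 ≤ m) (x : EuclideanSpace ℝ (Fin (m + 1))) (hx : ‖x‖ = 1) :
    ∀ i j : Fin (m + 1),
      inn2 (meridian x i, x i) (meridian x j, x j) = if i = j then (1 : ℝ) else 0 := by
  intro i j
  have hxx : ⟪x, x⟫ = 1 := by
    rw [real_inner_self_eq_norm_sq, hx]; norm_num
  have hei : ∀ k : Fin (m+1), ⟪EuclideanSpace.single k (1:ℝ), x⟫ = x k := by
    intro k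
    rw [EuclideanSpace.inner_single_left]
    simp
  have hxe : ∀ k : Fin (m+1), ⟪x, EuclideanSpace.single k (1:ℝ)⟫ = x k := by
    intro k
    rw [real_inner_comm]; exact hei k
  have hee : ⟪EuclideanSpace.single i (1:ℝ), EuclideanSpace.single j (1:ℝ)⟫
      = if i = j then (1:ℝ) else 0 := by
    rw [EuclideanSpace.inner_single_left]
    simp [EuclideanSpace.single_apply, eq_comm]
  simp only [inn2, meridian, inner_sub_left, inner_sub_right, inner_smul_left,
    inner_smul_right, hxx, hei, hxe, hee, RCLike.conj_to_real]
  ring_nf
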